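/- arXiv:0809.4387 — 2 statements merged into one kernel-verified Lean document; each statement's English description precedes it below -/
import Mathlib

section
/- If sup_{t>0} Φ_r(t) < ∞ for some r ≥ 1, then sup_{t>0} Φ_1(t) < ∞. -/
noncomputable def Phi (p : ℕ → ℝ) (r : ℕ) (t : ℝ) : ℝ :=
  ∑' j : ℕ, Real.exp (-(t * p j)) * (t * p j) ^ r / r.factorial

/-!
The terms of `Φ_1(t)` with `t p_j ≥ 1` are at most `r!` times the corresponding terms of
`Φ_r(t)`, so they contribute at most `r! · sup Φ_r`. For the others we use `e^{-x} x ≤ x`.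
If `Φ_r ≤ M`, then `p_{j+N} ≤ p_j / 2` for `N ≈ M / (e^{-1} 2^{-r} / r!)`: otherwise at
`t = 1 / p_j` the `N + 1` terms with indices in `[j, j + N]` all have `t p_i ∈ [1/2, 1]` and
each contributes at least `e^{-1} 2^{-r} / r!`. Hence along the indices with `t p_j < 1` the
values `t p_j` are at most `1` and halve every `N` steps, so they sum to at most `2N`.
-/

open Finset

noncomputable def poissonTerm (r : ℕ) (x : ℝ) : ℝ :=
  Real.exp (-x) * x ^ r / r.factorial

lemma Phi_eq_tsum_poissonTerm (p : ℕ → ℝ) (r : ℕ) (t : ℝ) :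
    Phi p r t = ∑' j, poissonTerm r (t * p j) := rfl

section poissonTerm

variable {r : ℕ} {x : ℝ}

lemma poissonTerm_nonneg (hx : 0 ≤ x) : 0 ≤ poissonTerm r x := by
  unfold poissonTerm; positivity

lemma poissonTerm_le_self (hr : 1 ≤ r) (hx : 0 ≤ x) : poissonTerm r x ≤ x := by
  obtain ⟨k, rfl⟩ := Nat.exists_eq_add_of_le' hr
  have hfac : x ^ (k + 1) / (k + 1).factorial ≤ x * (x ^ k / k.factorial) := by
    rw [pow_succ, Nat.factorial_succ, Nat.cast_mul, mul_div_assoc', mul_comm x]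
    exact div_le_div_of_nonneg_left (by positivity) (by positivity)
      (le_mul_of_one_le_left (by positivity) (by simp))
  calc poissonTerm (k + 1) x = Real.exp (-x) * (x ^ (k + 1) / (k + 1).factorial) := by
        rw [poissonTerm, mul_div_assoc]
    _ ≤ Real.exp (-x) * (x * Real.exp x) := by
        gcongr
        exact hfac.trans (mul_le_mul_of_nonneg_left (Real.pow_div_factorial_le_exp x hx k) hx)
    _ = x := by rw [mul_left_comm, ← Real.exp_add, neg_add_cancel, Real.exp_zero, mul_one]

lemma poissonTerm_one_le_factorial_mul (hr : 1 ≤ r) (hx : 1 ≤ x) :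
    poissonTerm 1 x ≤ r.factorial * poissonTerm r x := by
  rw [poissonTerm, poissonTerm, mul_div_cancel₀ _ (by positivity), Nat.factorial_one,
    Nat.cast_one, div_one, pow_one]
  exact mul_le_mul_of_nonneg_left (le_self_pow₀ hx (by omega)) (Real.exp_pos _).le

lemma le_poissonTerm_of_mem_Icc (hx : x ∈ Set.Icc (1 / 2 : ℝ) 1) :
    Real.exp (-1) * (1 / 2) ^ r / r.factorial ≤ poissonTerm r x := by
  obtain ⟨hlo, hhi⟩ := hx
  unfold poissonTerm
  gcongr

end poissonTerm

lemma sum_range_mul_le_of_le_half {u : ℕ → ℝ} {N : ℕ} {a : ℝ} (K : ℕ) (ha : 0 ≤ a)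
    (hua : ∀ j, u j ≤ a) (hhalf : ∀ j, u (j + N) ≤ u j / 2) :
    ∑ j ∈ range (K * N), u j ≤ 2 * N * a := by
  induction K generalizing u a with
  | zero => simpa using by positivity
  | succ K ih =>
    have hshift : ∑ j ∈ range (K * N), u (N + j) ≤ 2 * N * (a / 2) :=
      ih (u := fun j => u (N + j)) (by positivity)
        (fun j => by linarith [add_comm N j ▸ hhalf j, hua j])
        (fun j => by rw [← add_assoc]; exact hhalf (N + j))
    have hfirst : ∑ j ∈ range N, u j ≤ N * a := by
      simpa using sum_le_card_nsmul (range N) u a fun j _ => hua j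
    rw [add_one_mul, add_comm, sum_range_add]
    linarith

lemma tsum_le_of_le_half {u : ℕ → ℝ} {N : ℕ} {a : ℝ} (hN : 0 < N)
    (hu : ∀ j, 0 ≤ u j) (hua : ∀ j, u j ≤ a) (hhalf : ∀ j, u (j + N) ≤ u j / 2) :
    ∑' j, u j ≤ 2 * N * a := by
  refine Real.tsum_le_of_sum_range_le hu fun n => ?_
  calc ∑ j ∈ range n, u j ≤ ∑ j ∈ range (n * N), u j :=
        sum_le_sum_of_subset_of_nonneg (range_subset_range.mpr (Nat.le_mul_of_pos_right n hN))
          fun j _ _ => hu j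
    _ ≤ 2 * N * a := sum_range_mul_le_of_le_half n ((hu 0).trans (hua 0)) hua hhalf

section Phi

variable {p : ℕ → ℝ} {r : ℕ} {t : ℝ}

lemma summable_poissonTerm (hp : ∀ j, 0 ≤ p j) (hps : Summable p) (hr : 1 ≤ r)
    (ht : 0 ≤ t) : Summable fun j => poissonTerm r (t * p j) :=
  (hps.mul_left t).of_nonneg_of_le (fun j => poissonTerm_nonneg (mul_nonneg ht (hp j)))
    (fun j => poissonTerm_le_self hr (mul_nonneg ht (hp j)))

lemma sum_poissonTerm_le_Phi (hp : ∀ j, 0 ≤ p j) (hps : Summable p) (hr : 1 ≤ r)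
    (ht : 0 ≤ t) (s : Finset ℕ) : ∑ j ∈ s, poissonTerm r (t * p j) ≤ Phi p r t :=
  (summable_poissonTerm hp hps hr ht).sum_le_tsum s
    (fun j _ => poissonTerm_nonneg (mul_nonneg ht (hp j)))

lemma exists_forall_le_half_of_Phi_le (hp : ∀ j, 0 < p j) (hanti : Antitone p)
    (hps : Summable p) (hr : 1 ≤ r) {M : ℝ} (hM : ∀ t, 0 < t → Phi p r t ≤ M) :
    ∃ N, 0 < N ∧ ∀ j, p (j + N) ≤ p j / 2 := by
  set c : ℝ := Real.exp (-1) * (1 / 2) ^ r / r.factorial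
  have hc : 0 < c := by positivity
  refine ⟨⌈M / c⌉₊ + 1, Nat.succ_pos _, fun j => ?_⟩
  by_contra! hlt
  set N := ⌈M / c⌉₊ + 1
  have hs : 0 < (p j)⁻¹ := inv_pos.mpr (hp j)
  have hterm : ∀ i ∈ Icc j (j + N), c ≤ poissonTerm r ((p j)⁻¹ * p i) := by
    intro i hi
    obtain ⟨hji, hiN⟩ := mem_Icc.mp hi
    apply le_poissonTerm_of_mem_Icc
    rw [inv_mul_eq_div, Set.mem_Icc, le_div_iff₀ (hp j), div_le_one (hp j)]
    exact ⟨by linarith [hanti hiN], hanti hji⟩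
  have hlower : ((N : ℝ) + 1) * c ≤ Phi p r (p j)⁻¹ := by
    have := (card_nsmul_le_sum _ _ c hterm).trans
      (sum_poissonTerm_le_Phi (fun i => (hp i).le) hps hr hs.le _)
    rwa [Nat.card_Icc, show j + N + 1 - j = N + 1 by omega, nsmul_eq_mul, Nat.cast_succ] at this
  have hMc : M ≤ ⌈M / c⌉₊ * c := (div_le_iff₀ hc).mp (Nat.le_ceil _)
  have hN : (N : ℝ) = ⌈M / c⌉₊ + 1 := by push_cast [N]; ring
  rw [hN] at hlower
  linarith [hM _ hs]

lemma Phi_one_le (hp : ∀ j, 0 < p j) (hanti : Antitone p) (hps : Summable p) (hr : 1 ≤ r)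
    {N : ℕ} (hN : 0 < N) (hhalf : ∀ j, p (j + N) ≤ p j / 2) (ht : 0 < t) :
    Phi p 1 t ≤ r.factorial * Phi p r t + 2 * N := by
  have hp0 : ∀ j, 0 ≤ p j := fun j => (hp j).le
  have hsmall : ∃ j, t * p j < 1 := by
    have := (hps.tendsto_atTop_zero.const_mul t).eventually (gt_mem_nhds (a := 1) (by simp))
    exact this.exists
  classical
  set j₀ := Nat.find hsmall
  have hlarge : ∑ j ∈ range j₀, poissonTerm 1 (t * p j) ≤ r.factorial * Phi p r t := by
    calc ∑ j ∈ range j₀, poissonTerm 1 (t * p j)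
        ≤ ∑ j ∈ range j₀, r.factorial * poissonTerm r (t * p j) := sum_le_sum fun j hj =>
          poissonTerm_one_le_factorial_mul hr (not_lt.mp (Nat.find_min hsmall (mem_range.mp hj)))
      _ ≤ r.factorial * Phi p r t := by
          rw [← mul_sum]
          gcongr
          exact sum_poissonTerm_le_Phi hp0 hps hr ht.le _
  have htail : ∑' j, poissonTerm 1 (t * p (j + j₀)) ≤ 2 * N := by
    have hle : ∀ j, t * p (j + j₀) ≤ 1 := fun j =>
      (mul_le_mul_of_nonneg_left (hanti (Nat.le_add_left _ _)) ht.le).trans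
        (Nat.find_spec hsmall).le
    calc ∑' j, poissonTerm 1 (t * p (j + j₀)) ≤ ∑' j, t * p (j + j₀) :=
          ((summable_nat_add_iff j₀).mpr (summable_poissonTerm hp0 hps le_rfl ht.le)).tsum_le_tsum
            (fun j => poissonTerm_le_self le_rfl (mul_nonneg ht.le (hp0 _)))
            ((summable_nat_add_iff j₀).mpr (hps.mul_left t))
      _ ≤ 2 * N * 1 := tsum_le_of_le_half hN (fun j => mul_nonneg ht.le (hp0 _)) hle fun j => by
          rw [add_right_comm, mul_div_assoc]
          exact mul_le_mul_of_nonneg_left (hhalf _) ht.le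
      _ = 2 * N := mul_one _
  rw [Phi_eq_tsum_poissonTerm,
    ← (summable_poissonTerm hp0 hps le_rfl ht.le).sum_add_tsum_nat_add j₀]
  linarith

end Phi

theorem stmt_8 (p : ℕ → ℝ) (hp : ∀ j, 0 < p j) (hdec : ∀ j, p (j + 1) ≤ p j)
    (hsum : ∑' j : ℕ, p j = 1) (r : ℕ) (hr : 1 ≤ r)
    (hbdd : ∃ M : ℝ, ∀ t : ℝ, 0 < t → Phi p r t ≤ M) :
    ∃ M : ℝ, ∀ t : ℝ, 0 < t → Phi p 1 t ≤ M := by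
  obtain ⟨M, hM⟩ := hbdd
  have hps : Summable p := by
    by_contra h
    rw [tsum_eq_zero_of_not_summable h] at hsum
    exact zero_ne_one hsum
  have hanti : Antitone p := antitone_nat_of_succ_le hdec
  obtain ⟨N, hN, hhalf⟩ := exists_forall_le_half_of_Phi_le hp hanti hps hr hM
  refine ⟨r.factorial * M + 2 * N, fun t ht => ?_⟩
  calc Phi p 1 t ≤ r.factorial * Phi p r t + 2 * N := Phi_one_le hp hanti hps hr hN hhalf ht
    _ ≤ r.factorial * M + 2 * N := by gcongr; exact hM t ht
end

section
/- Suppose that for some 0 < λ < 1 and every h ≥ 1, liminf_{j→∞} p_{j+h}/p_j > λ. Then Φ_r(t) → ∞ as t → ∞ for all r ≥ 1. -/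
open Filter Finset Topology

noncomputable def poissonWeight (r : ℕ) (y : ℝ) : ℝ :=
  Real.exp (-y) * y ^ r / r.factorial

theorem Phi_eq_tsum_poissonWeight (p : ℕ → ℝ) (r : ℕ) (t : ℝ) :
    Phi p r t = ∑' j, poissonWeight r (t * p j) := rfl

section PoissonWeight

variable {r : ℕ} {y : ℝ}

theorem poissonWeight_nonneg (hy : 0 ≤ y) : 0 ≤ poissonWeight r y := by
  unfold poissonWeight
  positivity

theorem poissonWeight_le_self (hr : 1 ≤ r) (hy : 0 ≤ y) : poissonWeight r y ≤ y := by
  obtain ⟨m, rfl⟩ := Nat.exists_eq_add_of_le' hr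
  have hfact : y ^ m / (m + 1).factorial ≤ y ^ m / m.factorial :=
    div_le_div_of_nonneg_left (by positivity) (by positivity)
      (by exact_mod_cast Nat.factorial_le m.le_succ)
  calc poissonWeight (m + 1) y = y * (Real.exp (-y) * (y ^ m / (m + 1).factorial)) := by
        unfold poissonWeight; ring
    _ ≤ y * (Real.exp (-y) * Real.exp y) := by
        gcongr; exact hfact.trans (Real.pow_div_factorial_le_exp y hy m)
    _ = y := by rw [← Real.exp_add]; simp

theorem poissonWeight_ge_of_le_of_le_one {a : ℝ} (ha : 0 ≤ a) (hay : a ≤ y) (hy : y ≤ 1) :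
    Real.exp (-1) * a ^ r / r.factorial ≤ poissonWeight r y := by
  unfold poissonWeight
  gcongr

end PoissonWeight

section Phi

variable {p : ℕ → ℝ} {r : ℕ} {t : ℝ}

theorem summable_poissonWeight_mul (hp : ∀ j, 0 ≤ p j) (hs : Summable p) (hr : 1 ≤ r)
    (ht : 0 ≤ t) : Summable fun j => poissonWeight r (t * p j) :=
  (hs.mul_left t).of_nonneg_of_le (fun j => poissonWeight_nonneg (mul_nonneg ht (hp j)))
    fun j => poissonWeight_le_self hr (mul_nonneg ht (hp j))

theorem card_mul_le_Phi (hp : ∀ j, 0 ≤ p j) (hs : Summable p) (hr : 1 ≤ r) (ht : 0 ≤ t)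
    {a : ℝ} (ha : 0 ≤ a) {S : Finset ℕ} (hS : ∀ i ∈ S, a ≤ t * p i ∧ t * p i ≤ 1) :
    #S * (Real.exp (-1) * a ^ r / r.factorial) ≤ Phi p r t := by
  rw [Phi_eq_tsum_poissonWeight]
  calc #S * (Real.exp (-1) * a ^ r / r.factorial)
        = ∑ _i ∈ S, Real.exp (-1) * a ^ r / r.factorial := by simp
    _ ≤ ∑ i ∈ S, poissonWeight r (t * p i) :=
        sum_le_sum fun i hi => poissonWeight_ge_of_le_of_le_one ha (hS i hi).1 (hS i hi).2
    _ ≤ ∑' j, poissonWeight r (t * p j) :=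
        (summable_poissonWeight_mul hp hs hr ht).sum_le_tsum S
          fun j _ => poissonWeight_nonneg (mul_nonneg ht (hp j))

end Phi

theorem Nat.exists_le_and_not_succ {P : ℕ → Prop} {a b : ℕ} (hab : a ≤ b) (ha : P a)
    (hb : ¬P b) : ∃ m, a ≤ m ∧ P m ∧ ¬P (m + 1) := by
  by_contra! H
  exact hb (Nat.le_induction ha H b hab)

theorem eventually_mul_lt_of_lt_liminf_div {ι : Type*} {l : Filter ι} {f g : ι → ℝ}
    (hf : ∀ i, 0 ≤ f i) (hg : ∀ i, 0 < g i) {c : ℝ}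
    (h : c < liminf (fun i => f i / g i) l) : ∀ᶠ i in l, c * g i < f i :=
  (eventually_lt_of_lt_liminf h (isBoundedUnder_of ⟨0, fun i => div_nonneg (hf i) (hg i).le⟩)).mono
    fun i hi => (lt_div_iff₀ (hg i)).1 hi

theorem eventually_exists_block {p : ℕ → ℝ} (hp : ∀ j, 0 < p j) (hanti : Antitone p)
    (hp0 : Tendsto p atTop (𝓝 0)) {lam : ℝ} (hlam : 0 < lam) {h : ℕ}
    (hratio : ∀ᶠ j in atTop, lam * p j < p (j + h)) :
    ∀ᶠ t in atTop, ∃ m, ∀ i ∈ Ioc m (m + h), lam < t * p i ∧ t * p i ≤ 1 := by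
  obtain ⟨J, hJ⟩ := eventually_atTop.1 hratio
  filter_upwards [eventually_gt_atTop (1 / p J)] with t ht
  have ht0 : 0 < t := lt_trans (by have := hp J; positivity) ht
  have htJ : 1 < t * p J := by rwa [div_lt_iff₀ (hp J)] at ht
  obtain ⟨k, hJk, hk⟩ : ∃ k, J ≤ k ∧ ¬1 < t * p k := by
    have htp : Tendsto (fun j => t * p j) atTop (𝓝 0) := by simpa using hp0.const_mul t
    exact ((eventually_ge_atTop J).and (htp.eventually (gt_mem_nhds one_pos))).exists.imp
      fun k hk => ⟨hk.1, hk.2.not_gt⟩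
  obtain ⟨m, hJm, hm, hm1⟩ := Nat.exists_le_and_not_succ (P := fun j => 1 < t * p j) hJk htJ hk
  refine ⟨m, fun i hi => ?_⟩
  rw [mem_Ioc] at hi
  constructor
  · calc lam < lam * (t * p m) := lt_mul_of_one_lt_right hlam hm
      _ = t * (lam * p m) := by ring
      _ < t * p (m + h) := mul_lt_mul_of_pos_left (hJ m hJm) ht0
      _ ≤ t * p i := mul_le_mul_of_nonneg_left (hanti hi.2) ht0.le
  · exact (mul_le_mul_of_nonneg_left (hanti hi.1) ht0.le).trans (not_lt.1 hm1)

theorem stmt_17_general (p : ℕ → ℝ) (hp : ∀ j, 0 < p j) (hdec : ∀ j, p (j + 1) ≤ p j)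
    (hsum : ∑' j : ℕ, p j = 1) (lam : ℝ) (hlam0 : 0 < lam)
    (hliminf : ∀ h : ℕ, 1 ≤ h →
      lam < Filter.liminf (fun j : ℕ => p (j + h) / p j) Filter.atTop) :
    ∀ r : ℕ, 1 ≤ r →
      Filter.Tendsto (fun t => Phi p r t) Filter.atTop Filter.atTop := by
  intro r hr
  have hs : Summable p := by
    by_contra h
    simp [tsum_eq_zero_of_not_summable h] at hsum
  rw [tendsto_atTop]
  intro C
  set c := Real.exp (-1) * lam ^ r / r.factorial
  have hc : 0 < c := by positivity
  obtain ⟨N, hN⟩ := exists_nat_ge (C / c)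
  have hratio := eventually_mul_lt_of_lt_liminf_div (fun j => (hp _).le) hp
    (hliminf (N + 1) N.succ_pos)
  filter_upwards [eventually_exists_block hp (antitone_nat_of_succ_le hdec) hs.tendsto_atTop_zero
    hlam0 hratio, eventually_ge_atTop 0] with t ⟨m, hm⟩ ht
  calc C ≤ N * c := (div_le_iff₀ hc).1 hN
    _ ≤ #(Ioc m (m + (N + 1))) * c := by
        rw [Nat.card_Ioc, Nat.add_sub_cancel_left]
        gcongr
        exact_mod_cast N.le_succ
    _ ≤ Phi p r t := card_mul_le_Phi (fun j => (hp j).le) hs hr ht hlam0.le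
        fun i hi => ⟨(hm i hi).1.le, (hm i hi).2⟩

theorem stmt_17 (p : ℕ → ℝ) (hp : ∀ j, 0 < p j) (hdec : ∀ j, p (j + 1) ≤ p j)
    (hsum : ∑' j : ℕ, p j = 1) (lam : ℝ) (hlam0 : 0 < lam) (hlam1 : lam < 1)
    (hliminf : ∀ h : ℕ, 1 ≤ h →
      lam < Filter.liminf (fun j : ℕ => p (j + h) / p j) Filter.atTop) :
    ∀ r : ℕ, 1 ≤ r →
      Filter.Tendsto (fun t => Phi p r t) Filter.atTop Filter.atTop :=
  stmt_17_general p hp hdec hsum lam hlam0 hliminf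
end
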